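/- arXiv:2011.10855 — 6 statements merged into one kernel-verified Lean document; each statement's English description precedes it below -/
import Mathlib

section
/- Let p ≥ 1, let (X, Σ, ν) be a measure space, let V be a real vector space, and let Λ : V × ℝ → L^p(ν) be a linear map. Then there exists a linear map ξ : V → ℝ such that for all v ∈ V and all w ∈ ℝ, ∫_X |Λ(v, ξ(v))|^p dν ≤ (1 + 2^p) · ∫_X |Λ(v, w)|^p dν. In particular, ∫_X |Λ(v, ξ(v))|^p dν ≤ (1 + 2^p) · inf_{w ∈ ℝ} ∫_X |Λ(v, w)|^p dν. -/
/-!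
Write `Λ (v, w) = Λ (v, 0) + w • a` with `a = Λ (0, 1)`. A norming functional `φ` of `a`
(Hahn–Banach) picks the linear choice `ξ v = -φ (Λ (v, 0)) / ‖a‖`, which makes
`φ (Λ (v, ξ v)) = 0`. For any other `w`, the difference `Λ (v, ξ v) - Λ (v, w)` is
`(ξ v - w) • a`, whose norm is `|φ (Λ (v, w))| ≤ ‖Λ (v, w)‖`; hence
`‖Λ (v, ξ v)‖ ≤ 2 ‖Λ (v, w)‖`, and raising to the power `p` gives the constant
`2 ^ p ≤ 1 + 2 ^ p`.
-/

open MeasureTheory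

section NormedSpace

variable {E : Type*} [NormedAddCommGroup E] [NormedSpace ℝ E]

lemma norm_add_smul_le_two_mul_norm {φ : StrongDual ℝ E} (hφ : ‖φ‖ ≤ 1) {a g : E}
    (hφa : φ a = ‖a‖) {t : ℝ} (hφ0 : φ (g + t • a) = 0) :
    ‖g + t • a‖ ≤ 2 * ‖g‖ := by
  have hφg : φ g = -(t * ‖a‖) := by
    rw [map_add, map_smul, hφa, smul_eq_mul] at hφ0
    linarith
  have hta : |t| * ‖a‖ ≤ ‖g‖ :=
    calc |t| * ‖a‖ = |φ g| := by rw [hφg, abs_neg, abs_mul, abs_norm]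
      _ ≤ ‖φ‖ * ‖g‖ := φ.le_opNorm g
      _ ≤ ‖g‖ := mul_le_of_le_one_left (norm_nonneg g) hφ
  calc ‖g + t • a‖ ≤ ‖g‖ + |t| * ‖a‖ := by
        simpa only [norm_smul, Real.norm_eq_abs] using norm_add_le g (t • a)
    _ ≤ 2 * ‖g‖ := by linarith

lemma LinearMap.exists_norm_apply_le_two_mul_norm_apply {V : Type*} [AddCommGroup V]
    [Module ℝ V] (Λ : (V × ℝ) →ₗ[ℝ] E) :
    ∃ ξ : V →ₗ[ℝ] ℝ, ∀ v w, ‖Λ (v, ξ v)‖ ≤ 2 * ‖Λ (v, w)‖ := by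
  set a := Λ (0, 1)
  have hdecomp (v : V) (w : ℝ) : Λ (v, w) = Λ (v, 0) + w • a := by
    rw [← map_smul, ← map_add, Prod.smul_mk, smul_zero, smul_eq_mul, mul_one, Prod.mk_add_mk,
      add_zero, zero_add]
  by_cases ha : ‖a‖ = 0
  · refine ⟨0, fun v w => ?_⟩
    rw [LinearMap.zero_apply, hdecomp v w, norm_eq_zero.mp ha, smul_zero, add_zero]
    exact le_mul_of_one_le_left (norm_nonneg _) one_le_two
  obtain ⟨φ, hφ, hφa⟩ := exists_dual_vector ℝ a ha
  replace hφa : φ a = ‖a‖ := hφa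
  refine ⟨-‖a‖⁻¹ • (φ.toLinearMap ∘ₗ Λ ∘ₗ LinearMap.inl ℝ V ℝ), fun v w => ?_⟩
  set t := -‖a‖⁻¹ * φ (Λ (v, 0))
  change ‖Λ (v, t)‖ ≤ _
  have hφ0 : φ (Λ (v, t)) = 0 := by
    rw [hdecomp, map_add, map_smul, hφa, smul_eq_mul]
    simp only [t]
    field_simp
    ring
  have hsplit : Λ (v, t) = Λ (v, w) + (t - w) • a := by
    rw [hdecomp v t, hdecomp v w]; module
  rw [hsplit] at hφ0 ⊢
  exact norm_add_smul_le_two_mul_norm hφ.le hφa hφ0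

end NormedSpace

lemma MeasureTheory.Lp.integral_norm_rpow_eq_norm_rpow {X E : Type*} [MeasurableSpace X]
    [NormedAddCommGroup E] {ν : Measure X} {p : ℝ} (hp : 0 < p)
    (f : Lp E (ENNReal.ofReal p) ν) :
    ∫ x, ‖f x‖ ^ p ∂ν = ‖f‖ ^ p := by
  have hInt : 0 ≤ ∫ x, ‖f x‖ ^ p ∂ν := integral_nonneg fun x => by positivity
  have h := (Lp.memLp f).eLpNorm_eq_integral_rpow_norm (by simpa using hp) ENNReal.ofReal_ne_top
  rw [ENNReal.toReal_ofReal hp.le] at h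
  rw [Lp.norm_def, h, ENNReal.toReal_ofReal (by positivity), Real.rpow_inv_rpow hInt hp.ne']

lemma rpow_le_one_add_two_rpow_mul_rpow {x y p : ℝ} (hx : 0 ≤ x) (hxy : x ≤ 2 * y) (hp : 0 ≤ p) :
    x ^ p ≤ (1 + 2 ^ p) * y ^ p := by
  have hy : 0 ≤ y := by linarith
  calc x ^ p ≤ (2 * y) ^ p := Real.rpow_le_rpow hx hxy hp
    _ = 2 ^ p * y ^ p := Real.mul_rpow zero_le_two hy
    _ ≤ (1 + 2 ^ p) * y ^ p := by nlinarith [Real.rpow_nonneg hy p]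

/-- **Linear Map Lemma (one-dimensional case).**
Let `p ≥ 1`, let `(X, Σ, ν)` be a measure space, `V` a real vector space, and
`Λ : V × ℝ → L^p(ν)` a linear map.  Then there exists a linear map `ξ : V → ℝ` such that
for all `v ∈ V` and all `w ∈ ℝ`,
`∫ |Λ(v, ξ v)|^p dν ≤ (1 + 2^p) ∫ |Λ(v, w)|^p dν`; in particular the left-hand side is
bounded by `(1 + 2^p)` times the infimum over `w ∈ ℝ` of the right-hand side. -/
theorem stmt0 {X : Type*} [MeasurableSpace X] (ν : Measure X) (p : ℝ) (hp : 1 ≤ p)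
    (V : Type*) [AddCommGroup V] [Module ℝ V]
    (Λ : (V × ℝ) →ₗ[ℝ] Lp ℝ (ENNReal.ofReal p) ν) :
    ∃ ξ : V →ₗ[ℝ] ℝ,
      (∀ v : V, ∀ w : ℝ,
          ∫ x, |(Λ (v, ξ v)) x| ^ p ∂ν ≤ (1 + 2 ^ p) * ∫ x, |(Λ (v, w)) x| ^ p ∂ν) ∧
      (∀ v : V,
          ∫ x, |(Λ (v, ξ v)) x| ^ p ∂ν ≤
            (1 + 2 ^ p) * ⨅ w : ℝ, ∫ x, |(Λ (v, w)) x| ^ p ∂ν) := by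
  have hp0 : 0 < p := by linarith
  have : Fact (1 ≤ ENNReal.ofReal p) := ⟨by simpa using ENNReal.ofReal_le_ofReal hp⟩
  obtain ⟨ξ, hξ⟩ := Λ.exists_norm_apply_le_two_mul_norm_apply
  have hmain (v : V) (w : ℝ) :
      ∫ x, |(Λ (v, ξ v)) x| ^ p ∂ν ≤ (1 + 2 ^ p) * ∫ x, |(Λ (v, w)) x| ^ p ∂ν := by
    simp only [← Real.norm_eq_abs, Lp.integral_norm_rpow_eq_norm_rpow hp0]
    exact rpow_le_one_add_two_rpow_mul_rpow (norm_nonneg _) (hξ v w) hp0.le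
  refine ⟨ξ, hmain, fun v => ?_⟩
  rw [Real.mul_iInf_of_nonneg (by positivity)]
  exact le_ciInf (hmain v)
end

section
/- Iterating the one-dimensional linear optimization lemma: Let p ≥ 1, k ≥ 1, (X, Σ, ν) a measure space, V a real vector space, Λ : V × ℝ^k → L^p(ν) linear. Then there exists a linear map ξ : V → ℝ^k such that for all v ∈ V, ∫_X |Λ(v, ξ(v))|^p dν ≤ (1 + 2^p)^k · inf_{w ∈ ℝ^k} ∫_X |Λ(v, w)|^p dν. -/
/-!
For a seminorm `q` on `V × ℝ`, Hahn–Banach extends `(0, t) ↦ q (0, 1) * t` to a functional `G`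
with `|G| ≤ q`. Writing `G (v, t) = q (0, 1) * (t - ξ v)` defines a linear `ξ`, and
`q (v, ξ v) ≤ q (v, t) + |ξ v - t| * q (0, 1) ≤ 2 * q (v, t)` for every `t`.
Choosing the coordinates of `ℝ^k` one at a time (each choice linear in `v` and the remaining
coordinates) multiplies the constants, giving `2 ^ k`. For `q = ‖Λ ·‖` on `L^p` the integral is
`q ^ p`, and `(2 ^ k) ^ p = (2 ^ p) ^ k ≤ (1 + 2 ^ p) ^ k`.
-/

open MeasureTheory

lemma MeasureTheory.Lp.integral_norm_rpow_eq {X E : Type*} [MeasurableSpace X] {μ : Measure X}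
    [NormedAddCommGroup E] {p : ℝ} (hp : 0 < p) (f : Lp E (ENNReal.ofReal p) μ) :
    ∫ x, ‖f x‖ ^ p ∂μ = ‖f‖ ^ p := by
  rw [Lp.norm_def, toReal_eLpNorm (Lp.aestronglyMeasurable f),
    lpNorm_eq_integral_norm_rpow_toReal (by simpa using hp) ENNReal.ofReal_ne_top
      (Lp.aestronglyMeasurable f), ENNReal.toReal_ofReal hp.le,
    Real.rpow_inv_rpow (integral_nonneg fun _ => by positivity) hp.ne']

namespace Seminorm

lemma bddBelow_range_apply {𝕜 E ι : Type*} [SeminormedRing 𝕜] [AddGroup E] [SMul 𝕜 E]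
    (q : Seminorm 𝕜 E) (f : ι → E) : BddBelow (Set.range fun i => q (f i)) :=
  ⟨0, Set.forall_mem_range.2 fun _ => apply_nonneg q _⟩

variable {V U₁ U₂ : Type*} [AddCommGroup V] [Module ℝ V] [AddCommGroup U₁] [Module ℝ U₁]
  [AddCommGroup U₂] [Module ℝ U₂]

def IsLinearSelection (q : Seminorm ℝ (V × U₁)) (C : ℝ) (ξ : V →ₗ[ℝ] U₁) : Prop :=
  ∀ v, q (v, ξ v) ≤ C * ⨅ u, q (v, u)

lemma apply_le_apply_add_abs_sub_mul (q : Seminorm ℝ (V × ℝ)) (v : V) (s t : ℝ) :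
    q (v, s) ≤ q (v, t) + |s - t| * q (0, 1) := by
  have hsplit : ((v, s) : V × ℝ) = (v, t) + (s - t) • ((0 : V), (1 : ℝ)) := by
    ext <;> simp
  calc q (v, s) ≤ q (v, t) + q ((s - t) • ((0 : V), (1 : ℝ))) := hsplit ▸ map_add_le_add q _ _
    _ = q (v, t) + |s - t| * q (0, 1) := by rw [map_smul_eq_mul, Real.norm_eq_abs]

lemma exists_linearMap_abs_add_le (q : Seminorm ℝ (V × ℝ)) :
    ∃ g : V →ₗ[ℝ] ℝ, ∀ v t, |g v + q (0, 1) * t| ≤ q (v, t) := by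
  set e := q (0, 1)
  have hq_vert : ∀ c : ℝ, q (0, c) = |c| * e := fun c => by
    rw [← Real.norm_eq_abs, ← map_smul_eq_mul, Prod.smul_mk, smul_zero, smul_eq_mul, mul_one]
  let f : V × ℝ →ₗ.[ℝ] ℝ :=
    ⟨LinearMap.ker (LinearMap.fst ℝ V ℝ), (e • LinearMap.snd ℝ V ℝ).domRestrict _⟩
  obtain ⟨G, hGf, hGq⟩ := exists_extension_of_le_sublinear f q
    (fun c hc x => by rw [map_smul_eq_mul, Real.norm_of_nonneg hc.le]) (map_add_le_add q)
    (fun ⟨⟨v, c⟩, (hv : v = 0)⟩ => by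
      subst hv
      simpa [f, hq_vert, mul_comm e] using mul_le_mul_of_nonneg_right (le_abs_self c)
        (apply_nonneg q (0, 1)))
  have hG_abs : ∀ x, |G x| ≤ q x := fun x =>
    abs_le.2 ⟨by linarith [map_neg_eq_map q x, G.map_neg x, hGq (-x)], hGq x⟩
  have hG_vert : G (0, 1) = e := by simpa [f] using hGf ⟨(0, 1), rfl⟩
  refine ⟨G ∘ₗ LinearMap.inl ℝ V ℝ, fun v t => ?_⟩
  have hsplit : ((v, t) : V × ℝ) = (v, 0) + t • ((0 : V), (1 : ℝ)) := by ext <;> simp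
  calc |(G ∘ₗ LinearMap.inl ℝ V ℝ) v + e * t| = |G ((v, 0) + t • (0, 1))| := by
        rw [map_add, map_smul, hG_vert, smul_eq_mul, mul_comm t]
        rfl
    _ ≤ q (v, t) := (hG_abs _).trans_eq (congrArg q hsplit.symm)

lemma exists_isLinearSelection_two (q : Seminorm ℝ (V × ℝ)) :
    ∃ ξ : V →ₗ[ℝ] ℝ, q.IsLinearSelection 2 ξ := by
  obtain ⟨g, hg⟩ := exists_linearMap_abs_add_le q
  set e := q (0, 1)
  -- when `e = 0` this is `ξ = 0` (as `0⁻¹ = 0`), and then `q (v, ·)` is constant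
  refine ⟨-e⁻¹ • g, fun v => ?_⟩
  rw [Real.mul_iInf_of_nonneg zero_le_two]
  refine le_ciInf fun t => ?_
  have hcorr : |(-e⁻¹ • g) v - t| * e ≤ |g v + e * t| := by
    rcases (apply_nonneg q (0, 1) : 0 ≤ e).eq_or_lt with he | he
    · simp [e, ← he]
    · have he' : e ≠ 0 := he.ne'
      refine le_of_eq ?_
      calc |(-e⁻¹ • g) v - t| * e = |-(((-e⁻¹ • g) v - t) * e)| := by
            rw [abs_neg, abs_mul, abs_of_pos he]
        _ = |g v + e * t| := by
            congr 1
            simp only [LinearMap.smul_apply, smul_eq_mul]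
            field_simp
            ring
  linarith [apply_le_apply_add_abs_sub_mul q v ((-e⁻¹ • g) v) t, hg v t]

lemma IsLinearSelection.comp_prodMap_equiv {q : Seminorm ℝ (V × U₁)} {C : ℝ}
    {ξ : V →ₗ[ℝ] U₂} (ε : U₂ ≃ₗ[ℝ] U₁)
    (hξ : (q.comp (LinearMap.id.prodMap ε.toLinearMap)).IsLinearSelection C ξ) :
    q.IsLinearSelection C (ε.toLinearMap ∘ₗ ξ) := fun v =>
  (hξ v).trans_eq <| congrArg (C * ·) (ε.toEquiv.iInf_comp (g := fun u => q (v, u)))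

lemma IsLinearSelection.prod {q : Seminorm ℝ (V × (U₁ × U₂))} {C₁ C₂ : ℝ}
    {ξ : V →ₗ[ℝ] U₁} {η : V × U₁ →ₗ[ℝ] U₂} (hC₁ : 0 ≤ C₁) (hC₂ : 0 ≤ C₂)
    (hξ : (q.comp ((LinearEquiv.prodAssoc ℝ V U₁ U₂).toLinearMap ∘ₗ
      LinearMap.id.prod η)).IsLinearSelection C₁ ξ)
    (hη : (q.comp (LinearEquiv.prodAssoc ℝ V U₁ U₂).toLinearMap).IsLinearSelection C₂ η) :
    q.IsLinearSelection (C₁ * C₂) (ξ.prod (η ∘ₗ LinearMap.id.prod ξ)) := by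
  intro v
  have hgraph : ⨅ u₁, q (v, u₁, η (v, u₁)) ≤ C₂ * ⨅ u, q (v, u) := by
    rw [Real.mul_iInf_of_nonneg hC₂]
    refine le_ciInf fun ⟨u₁, u₂⟩ => ?_
    calc ⨅ u₁, q (v, u₁, η (v, u₁)) ≤ q (v, u₁, η (v, u₁)) :=
          ciInf_le (q.bddBelow_range_apply _) u₁
      _ ≤ C₂ * ⨅ u₂', q (v, u₁, u₂') := hη (v, u₁)
      _ ≤ C₂ * q (v, u₁, u₂) :=
          mul_le_mul_of_nonneg_left (ciInf_le (q.bddBelow_range_apply _) u₂) hC₂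
  calc q (v, ξ v, η (v, ξ v)) ≤ C₁ * ⨅ u₁, q (v, u₁, η (v, u₁)) := hξ v
    _ ≤ C₁ * (C₂ * ⨅ u, q (v, u)) := mul_le_mul_of_nonneg_left hgraph hC₁
    _ = C₁ * C₂ * ⨅ u, q (v, u) := (mul_assoc _ _ _).symm

theorem exists_isLinearSelection_pi (k : ℕ) (q : Seminorm ℝ (V × (Fin k → ℝ))) :
    ∃ ξ : V →ₗ[ℝ] (Fin k → ℝ), q.IsLinearSelection (2 ^ k) ξ := by
  induction k with
  | zero =>
    refine ⟨0, fun v => ?_⟩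
    rw [pow_zero, one_mul]
    exact le_ciInf fun u => le_of_eq (congrArg (fun w => q (v, w)) (Subsingleton.elim _ _))
  | succ k ih =>
    let ε : ((Fin k → ℝ) × ℝ) ≃ₗ[ℝ] (Fin (k + 1) → ℝ) :=
      (LinearEquiv.prodComm ℝ _ _).trans (Fin.consLinearEquiv ℝ fun _ => ℝ)
    let q' := q.comp (LinearMap.id.prodMap ε.toLinearMap)
    obtain ⟨η, hη⟩ := exists_isLinearSelection_two
      (q'.comp (LinearEquiv.prodAssoc ℝ V (Fin k → ℝ) ℝ).toLinearMap)
    obtain ⟨ξ, hξ⟩ := ih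
      (q'.comp ((LinearEquiv.prodAssoc ℝ V (Fin k → ℝ) ℝ).toLinearMap ∘ₗ LinearMap.id.prod η))
    rw [pow_succ]
    exact ⟨_, (hξ.prod (by positivity) zero_le_two hη).comp_prodMap_equiv ε⟩

end Seminorm

theorem stmt1_general {X : Type*} [MeasurableSpace X] (ν : Measure X) (p : ℝ) (hp : 1 ≤ p)
    (k : ℕ) (V : Type*) [AddCommGroup V] [Module ℝ V]
    (Λ : (V × (Fin k → ℝ)) →ₗ[ℝ] Lp ℝ (ENNReal.ofReal p) ν) :
    ∃ ξ : V →ₗ[ℝ] (Fin k → ℝ), ∀ v : V,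
      ∫ x, |(Λ (v, ξ v)) x| ^ p ∂ν ≤
        (1 + 2 ^ p) ^ k * ⨅ w : Fin k → ℝ, ∫ x, |(Λ (v, w)) x| ^ p ∂ν := by
  have hp₀ : 0 < p := zero_lt_one.trans_le hp
  have : Fact (1 ≤ ENNReal.ofReal p) := ⟨ENNReal.one_le_ofReal.2 hp⟩
  obtain ⟨ξ, hξ⟩ := Seminorm.exists_isLinearSelection_pi k ((normSeminorm ℝ _).comp Λ)
  refine ⟨ξ, fun v => ?_⟩
  simp only [← Real.norm_eq_abs, Lp.integral_norm_rpow_eq hp₀]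
  set m := ⨅ w, ‖Λ (v, w)‖
  have hm : 0 ≤ m := Real.iInf_nonneg fun _ => norm_nonneg _
  calc ‖Λ (v, ξ v)‖ ^ p ≤ (2 ^ k * m) ^ p := Real.rpow_le_rpow (norm_nonneg _) (hξ v) hp₀.le
    _ = (2 ^ p) ^ k * m ^ p := by
      rw [Real.mul_rpow (by positivity) hm, Real.rpow_pow_comm zero_le_two]
    _ ≤ (1 + 2 ^ p) ^ k * ⨅ w, ‖Λ (v, w)‖ ^ p := by
      gcongr
      · linarith
      · exact le_ciInf fun w => Real.rpow_le_rpow hm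
          (ciInf_le ((normSeminorm ℝ _).bddBelow_range_apply fun w => Λ (v, w)) w) hp₀.le

/-- **Linear Map Lemma (iterated, `k`-dimensional case).**
Let `p ≥ 1`, `k ≥ 1`, `(X, Σ, ν)` a measure space, `V` a real vector space, and
`Λ : V × ℝ^k → L^p(ν)` a linear map.  Then there exists a linear map `ξ : V → ℝ^k`
such that for all `v ∈ V`,
`∫ |Λ(v, ξ v)|^p dν ≤ (1 + 2^p)^k · inf_{w ∈ ℝ^k} ∫ |Λ(v, w)|^p dν`. -/
theorem stmt1 {X : Type*} [MeasurableSpace X] (ν : Measure X) (p : ℝ) (hp : 1 ≤ p)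
    (k : ℕ) (hk : 1 ≤ k) (V : Type*) [AddCommGroup V] [Module ℝ V]
    (Λ : (V × (Fin k → ℝ)) →ₗ[ℝ] Lp ℝ (ENNReal.ofReal p) ν) :
    ∃ ξ : V →ₗ[ℝ] (Fin k → ℝ), ∀ v : V,
      ∫ x, |(Λ (v, ξ v)) x| ^ p ∂ν ≤
        (1 + 2 ^ p) ^ k * ⨅ w : Fin k → ℝ, ∫ x, |(Λ (v, w)) x| ^ p ∂ν :=
  stmt1_general ν p hp k V Λ
end

section
/- Good geometry of CZ cubes: if Q, Q' are CZ cubes whose closures intersect, then (1/2)·δ_Q ≤ δ_{Q'} ≤ 2·δ_Q. -/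
noncomputable section

/-- A dyadic cube `∏_i (j_i 2^k, (j_i+1) 2^k]` in `ℝ^n`, recorded by its scale `k` and
its integer coordinates `j`. -/
structure DyadicCube (n : ℕ) where
  k : ℤ
  j : Fin n → ℤ

namespace DyadicCube

/-- The sidelength `2^k` of a dyadic cube. -/
def sidelength {n : ℕ} (Q : DyadicCube n) : ℝ := 2 ^ Q.k

/-- The underlying (half-open) set of a dyadic cube. -/
def toSet {n : ℕ} (Q : DyadicCube n) : Set (Fin n → ℝ) :=
  {x | ∀ i, (Q.j i : ℝ) * 2 ^ Q.k < x i ∧ x i ≤ ((Q.j i : ℝ) + 1) * 2 ^ Q.k}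

/-- The center of a dyadic cube. -/
def center {n : ℕ} (Q : DyadicCube n) : Fin n → ℝ :=
  fun i => ((Q.j i : ℝ) + 1 / 2) * 2 ^ Q.k

/-- The concentric dilate `cQ` of a dyadic cube `Q` (as a closed cube). -/
def dilate {n : ℕ} (Q : DyadicCube n) (c : ℝ) : Set (Fin n → ℝ) :=
  {x | ∀ i, |x i - Q.center i| ≤ c * Q.sidelength / 2}

end DyadicCube

/-- The unit cube `Q° = (0,1]^n` as a dyadic cube. -/
def unitCube (n : ℕ) : DyadicCube n := ⟨0, fun _ => 0⟩

/-- Monotonicity of the `OK` predicate: if `Q, Q'` are dyadic subcubes of `Q°`, `Q'` is OK and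
`3Q ⊆ 3Q'`, then `Q` is OK. -/
def OKmono {n : ℕ} (OK : DyadicCube n → Prop) : Prop :=
  ∀ Q Q' : DyadicCube n, Q.toSet ⊆ (unitCube n).toSet → Q'.toSet ⊆ (unitCube n).toSet →
    OK Q' → Q.dilate 3 ⊆ Q'.dilate 3 → OK Q

/-- A Calderón–Zygmund cube: an OK dyadic subcube of `Q°` such that every dyadic subcube of
`Q°` properly containing it is not OK. -/
def CZ {n : ℕ} (OK : DyadicCube n → Prop) (Q : DyadicCube n) : Prop :=
  Q.toSet ⊆ (unitCube n).toSet ∧ OK Q ∧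
    ∀ Q' : DyadicCube n, Q'.toSet ⊆ (unitCube n).toSet → Q.toSet ⊂ Q'.toSet → ¬ OK Q'

/-- A keystone cube: a CZ cube `Q` such that every CZ cube meeting `100Q` has sidelength
at least that of `Q`. -/
def Keystone {n : ℕ} (OK : DyadicCube n → Prop) (Q : DyadicCube n) : Prop :=
  CZ OK Q ∧ ∀ Q' : DyadicCube n, CZ OK Q' → (Q'.toSet ∩ Q.dilate 100).Nonempty →
    Q.sidelength ≤ Q'.sidelength

/-- The union of all CZ cubes. -/
def KCZ {n : ℕ} (OK : DyadicCube n → Prop) : Set (Fin n → ℝ) :=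
  ⋃ (Q : DyadicCube n) (_ : CZ OK Q), Q.toSet

/-- The set of keystone points `K_p = Q° \ ⋃ {Q : Q CZ}`. -/
def Kp {n : ℕ} (OK : DyadicCube n → Prop) : Set (Fin n → ℝ) :=
  (unitCube n).toSet \ KCZ OK

namespace GoodGeomAux

open DyadicCube

variable {n : ℕ}

lemma sl_pos (Q : DyadicCube n) : 0 < Q.sidelength := zpow_pos two_pos _

/-- The dyadic parent of a dyadic cube. -/
def parent (Q : DyadicCube n) : DyadicCube n := ⟨Q.k + 1, fun i => Q.j i / 2⟩

lemma sl_parent (Q : DyadicCube n) : (parent Q).sidelength = 2 * Q.sidelength := by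
  show (2:ℝ) ^ (Q.k + 1) = 2 * 2 ^ Q.k
  rw [zpow_add_one₀ (two_ne_zero)]; ring

lemma jdiv (Q : DyadicCube n) (i : Fin n) :
    Q.j i = 2 * (Q.j i / 2) ∨ Q.j i = 2 * (Q.j i / 2) + 1 := by
  omega

lemma subset_parent (Q : DyadicCube n) : Q.toSet ⊆ (parent Q).toSet := by
  intro x hx i
  obtain ⟨h1, h2⟩ := hx i
  have hp : (0:ℝ) < (2:ℝ) ^ Q.k := zpow_pos two_pos _
  have h2k : ((2:ℝ)) ^ (Q.k + 1) = 2 * 2 ^ Q.k := by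
    rw [zpow_add_one₀ (two_ne_zero)]; ring
  have hj : ((Q.j i : ℝ)) = 2 * ((Q.j i / 2 : ℤ) : ℝ) ∨
      ((Q.j i : ℝ)) = 2 * ((Q.j i / 2 : ℤ) : ℝ) + 1 := by
    rcases jdiv Q i with h | h
    · left; exact_mod_cast congrArg (fun z : ℤ => (z : ℝ)) h
    · right; exact_mod_cast congrArg (fun z : ℤ => (z : ℝ)) h
  show ((Q.j i / 2 : ℤ) : ℝ) * 2 ^ (Q.k + 1) < x i ∧
      x i ≤ (((Q.j i / 2 : ℤ) : ℝ) + 1) * 2 ^ (Q.k + 1)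
  rw [h2k]
  rcases hj with h | h <;> constructor <;> nlinarith

lemma corner_mem (Q : DyadicCube n) :
    (fun i => ((Q.j i : ℝ) + 1) * 2 ^ Q.k) ∈ Q.toSet := by
  intro i
  have hp : (0:ℝ) < (2:ℝ) ^ Q.k := zpow_pos two_pos _
  refine ⟨?_, le_refl _⟩
  show (Q.j i : ℝ) * 2 ^ Q.k < ((Q.j i : ℝ) + 1) * 2 ^ Q.k
  nlinarith

lemma nesting {A B : DyadicCube n} (hk : A.k ≤ B.k)
    (hne : (A.toSet ∩ B.toSet).Nonempty) : A.toSet ⊆ B.toSet := by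
  obtain ⟨x, hxA, hxB⟩ := hne
  intro y hy i
  set M : ℤ := 2 ^ (B.k - A.k).toNat with hM
  have hpA : (0:ℝ) < (2:ℝ) ^ A.k := zpow_pos two_pos _
  have hMpow : ((M : ℝ)) * 2 ^ A.k = 2 ^ B.k := by
    rw [hM]
    push_cast
    rw [← zpow_natCast (2:ℝ), ← zpow_add₀ (two_ne_zero (α := ℝ))]
    congr 1
    omega
  obtain ⟨ha1, ha2⟩ := hxA i
  obtain ⟨hb1, hb2⟩ := hxB i
  -- integer comparisons
  have key1 : (B.j i) * M ≤ A.j i := by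
    have hr : ((B.j i : ℝ)) * M < (A.j i : ℝ) + 1 := by
      have : ((B.j i : ℝ)) * M * 2 ^ A.k < ((A.j i : ℝ) + 1) * 2 ^ A.k := by
        calc ((B.j i : ℝ)) * M * 2 ^ A.k = (B.j i : ℝ) * 2 ^ B.k := by
              rw [mul_assoc, hMpow]
          _ < x i := hb1
          _ ≤ ((A.j i : ℝ) + 1) * 2 ^ A.k := ha2
      exact lt_of_mul_lt_mul_right this hpA.le
    have : (B.j i) * M < A.j i + 1 := by exact_mod_cast hr
    omega
  have key2 : A.j i + 1 ≤ (B.j i + 1) * M := by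
    have hr : ((A.j i : ℝ)) < ((B.j i : ℝ) + 1) * M := by
      have : ((A.j i : ℝ)) * 2 ^ A.k < ((B.j i : ℝ) + 1) * M * 2 ^ A.k := by
        calc ((A.j i : ℝ)) * 2 ^ A.k < x i := ha1
          _ ≤ ((B.j i : ℝ) + 1) * 2 ^ B.k := hb2
          _ = ((B.j i : ℝ) + 1) * M * 2 ^ A.k := by rw [mul_assoc, hMpow]
      exact lt_of_mul_lt_mul_right this hpA.le
    have : A.j i < (B.j i + 1) * M := by exact_mod_cast hr
    omega
  obtain ⟨hy1, hy2⟩ := hy i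
  constructor
  · calc ((B.j i : ℝ)) * 2 ^ B.k = ((B.j i : ℝ)) * M * 2 ^ A.k := by rw [mul_assoc, hMpow]
      _ ≤ (A.j i : ℝ) * 2 ^ A.k := by
          have : ((B.j i : ℝ)) * M ≤ (A.j i : ℝ) := by exact_mod_cast key1
          nlinarith
      _ < y i := hy1
  · calc y i ≤ ((A.j i : ℝ) + 1) * 2 ^ A.k := hy2
      _ ≤ ((B.j i : ℝ) + 1) * M * 2 ^ A.k := by
          have : ((A.j i : ℝ)) + 1 ≤ ((B.j i : ℝ) + 1) * M := by exact_mod_cast key2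
          nlinarith
      _ = ((B.j i : ℝ) + 1) * 2 ^ B.k := by rw [mul_assoc, hMpow]

lemma k_nonpos {Q : DyadicCube n} (hn : 1 ≤ n)
    (h : Q.toSet ⊆ (unitCube n).toSet) : Q.k ≤ 0 := by
  set i0 : Fin n := ⟨0, hn⟩
  have hx := h (corner_mem Q) i0
  have hp : (0:ℝ) < (2:ℝ) ^ Q.k := zpow_pos two_pos _
  obtain ⟨h1, h2⟩ := hx
  simp only [unitCube, Int.cast_zero, zpow_zero, zero_mul, mul_one, zero_add, one_mul] at h1 h2
  -- h1 : 0 < (j+1) * 2^k, h2 : (j+1) * 2^k ≤ 1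
  have hj : (1:ℝ) ≤ (Q.j i0 : ℝ) + 1 := by
    have hz : (0:ℤ) < Q.j i0 + 1 := by
      by_contra hc
      push_neg at hc
      have : ((Q.j i0 : ℝ) + 1) ≤ 0 := by exact_mod_cast hc
      nlinarith
    have : (1:ℤ) ≤ Q.j i0 + 1 := hz
    exact_mod_cast this
  have h2k : (2:ℝ) ^ Q.k ≤ 1 := by nlinarith
  by_contra hk
  push_neg at hk
  have : (2:ℝ) ^ (0:ℤ) < 2 ^ Q.k := zpow_lt_zpow_right₀ one_lt_two hk
  rw [zpow_zero] at this
  linarith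

lemma ssubset_parent (hn : 1 ≤ n) (Q : DyadicCube n) : Q.toSet ⊂ (parent Q).toSet := by
  refine ⟨subset_parent Q, fun hsub => ?_⟩
  set i0 : Fin n := ⟨0, hn⟩
  have hp : (0:ℝ) < (2:ℝ) ^ Q.k := zpow_pos two_pos _
  have h2k : ((2:ℝ)) ^ (Q.k + 1) = 2 * 2 ^ Q.k := by
    rw [zpow_add_one₀ (two_ne_zero)]; ring
  set m : ℤ := Q.j i0 / 2 with hm
  rcases jdiv Q i0 with hj | hj
  · -- even case: witness with i0-coordinate (2m+2) * 2^k
    set w : ℝ := (2 * (m:ℝ) + 2) * 2 ^ Q.k with hw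
    set x : Fin n → ℝ :=
      Function.update (fun i => ((Q.j i : ℝ) + 1) * 2 ^ Q.k) i0 w with hxdef
    have hxp : x ∈ (parent Q).toSet := by
      intro i
      by_cases hi : i = i0
      · rw [hi]
        have hxi : x i0 = w := Function.update_self _ _ _
        rw [hxi]
        show ((m:ℤ) : ℝ) * 2 ^ (Q.k + 1) < w ∧ w ≤ (((m:ℤ) : ℝ) + 1) * 2 ^ (Q.k + 1)
        rw [h2k, hw]
        constructor <;> nlinarith
      · have hxi : x i = ((Q.j i : ℝ) + 1) * 2 ^ Q.k := Function.update_of_ne hi _ _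
        have := (subset_parent Q (corner_mem Q)) i
        rwa [← hxi] at this
    have hxQ := hsub hxp i0
    have hxi : x i0 = w := Function.update_self _ _ _
    rw [hxi] at hxQ
    obtain ⟨-, hx2⟩ := hxQ
    have hjr : ((Q.j i0 : ℝ)) = 2 * (m:ℝ) := by exact_mod_cast hj
    rw [hw, hjr] at hx2
    nlinarith
  · -- odd case: witness with i0-coordinate (2m+1) * 2^k = j * 2^k
    set w : ℝ := (2 * (m:ℝ) + 1) * 2 ^ Q.k with hw
    set x : Fin n → ℝ :=
      Function.update (fun i => ((Q.j i : ℝ) + 1) * 2 ^ Q.k) i0 w with hxdef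
    have hxp : x ∈ (parent Q).toSet := by
      intro i
      by_cases hi : i = i0
      · rw [hi]
        have hxi : x i0 = w := Function.update_self _ _ _
        rw [hxi]
        show ((m:ℤ) : ℝ) * 2 ^ (Q.k + 1) < w ∧ w ≤ (((m:ℤ) : ℝ) + 1) * 2 ^ (Q.k + 1)
        rw [h2k, hw]
        constructor <;> nlinarith
      · have hxi : x i = ((Q.j i : ℝ) + 1) * 2 ^ Q.k := Function.update_of_ne hi _ _
        have := (subset_parent Q (corner_mem Q)) i
        rwa [← hxi] at this
    have hxQ := hsub hxp i0
    have hxi : x i0 = w := Function.update_self _ _ _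
    rw [hxi] at hxQ
    obtain ⟨hx1, -⟩ := hxQ
    have hjr : ((Q.j i0 : ℝ)) = 2 * (m:ℝ) + 1 := by exact_mod_cast hj
    rw [hw, hjr] at hx1
    nlinarith

lemma closure_subset_dilate_one (Q : DyadicCube n) : closure Q.toSet ⊆ Q.dilate 1 := by
  have hcl : IsClosed (Q.dilate 1) := by
    have : Q.dilate 1 = ⋂ i, (fun x : Fin n → ℝ => x i) ⁻¹'
        (Metric.closedBall (Q.center i) (1 * Q.sidelength / 2)) := by
      ext x
      simp [DyadicCube.dilate, Real.dist_eq, Set.mem_iInter]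
    rw [this]
    exact isClosed_iInter fun i => Metric.isClosed_closedBall.preimage (continuous_apply i)
  refine closure_minimal ?_ hcl
  intro x hx i
  obtain ⟨h1, h2⟩ := hx i
  have hp : (0:ℝ) < (2:ℝ) ^ Q.k := zpow_pos two_pos _
  rw [abs_le]
  unfold DyadicCube.center DyadicCube.sidelength
  constructor <;> nlinarith

lemma center_parent_close (Q : DyadicCube n) (i : Fin n) :
    |(parent Q).center i - Q.center i| ≤ Q.sidelength / 2 := by
  have hp : (0:ℝ) < (2:ℝ) ^ Q.k := zpow_pos two_pos _
  have h2k : ((2:ℝ)) ^ (Q.k + 1) = 2 * 2 ^ Q.k := by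
    rw [zpow_add_one₀ (two_ne_zero)]; ring
  have hpk : (parent Q).k = Q.k + 1 := rfl
  have hpj : (parent Q).j i = Q.j i / 2 := rfl
  rcases jdiv Q i with hj | hj <;>
  · have hjr := congrArg (fun z : ℤ => (z : ℝ)) hj
    push_cast at hjr
    rw [abs_le]
    unfold DyadicCube.center DyadicCube.sidelength
    rw [hpk, hpj, h2k]
    constructor <;> nlinarith

/-- The key half of good geometry: a CZ cube touching the closure of another CZ cube
is not more than twice as large. -/
lemma half {OK : DyadicCube n → Prop} (hn : 1 ≤ n) (hmono : OKmono OK)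
    {Q Q' : DyadicCube n} (hQ : CZ OK Q) (hQ' : CZ OK Q')
    (htouch : (closure Q.toSet ∩ closure Q'.toSet).Nonempty) :
    Q'.sidelength ≤ 2 * Q.sidelength := by
  by_contra hbig
  push_neg at hbig
  -- sidelengths are powers of two, so δ_Q' ≥ 4 δ_Q
  have hk : Q.k + 2 ≤ Q'.k := by
    by_contra hk
    push_neg at hk
    have hle : Q'.k ≤ Q.k + 1 := by omega
    have : (2:ℝ) ^ Q'.k ≤ 2 ^ (Q.k + 1) := zpow_le_zpow_right₀ one_le_two hle
    rw [zpow_add_one₀ (two_ne_zero)] at this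
    have h2 : Q'.sidelength ≤ 2 * Q.sidelength := by
      unfold DyadicCube.sidelength; linarith
    linarith
  have hfour : 4 * Q.sidelength ≤ Q'.sidelength := by
    have : (2:ℝ) ^ (Q.k + 2) ≤ 2 ^ Q'.k := zpow_le_zpow_right₀ one_le_two hk
    have he : (2:ℝ) ^ (Q.k + 2) = 4 * 2 ^ Q.k := by
      rw [show Q.k + 2 = Q.k + 1 + 1 by ring, zpow_add_one₀ (two_ne_zero),
        zpow_add_one₀ (two_ne_zero)]
      ring
    unfold DyadicCube.sidelength
    linarith [he ▸ this]
  -- Q'.k ≤ 0 hence the parent of Q lies in the unit cube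
  have hk' : Q'.k ≤ 0 := k_nonpos hn hQ'.1
  have hpk : (parent Q).k ≤ (unitCube n).k := by
    show Q.k + 1 ≤ 0
    omega
  have hPsub : (parent Q).toSet ⊆ (unitCube n).toSet := by
    apply nesting hpk
    obtain ⟨y, hy⟩ : Q.toSet.Nonempty := ⟨_, corner_mem Q⟩
    exact ⟨y, subset_parent Q hy, hQ.1 hy⟩
  -- 3 (parent Q) ⊆ 3 Q'
  obtain ⟨z, hz, hz'⟩ := htouch
  have hzQ : z ∈ Q.dilate 1 := closure_subset_dilate_one Q hz
  have hzQ' : z ∈ Q'.dilate 1 := closure_subset_dilate_one Q' hz'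
  have hdil : (parent Q).dilate 3 ⊆ Q'.dilate 3 := by
    intro x hx i
    have h1 := hx i
    have h2 := center_parent_close Q i
    have h3 := hzQ i
    have h4 := hzQ' i
    rw [sl_parent] at h1
    have tri : |x i - Q'.center i| ≤ |x i - (parent Q).center i| +
        |(parent Q).center i - Q.center i| + |Q.center i - z i| + |z i - Q'.center i| := by
      calc |x i - Q'.center i|
          = |(x i - (parent Q).center i) + ((parent Q).center i - Q.center i) +
            (Q.center i - z i) + (z i - Q'.center i)| := by ring_nf
        _ ≤ _ := by
            calc |(x i - (parent Q).center i) + ((parent Q).center i - Q.center i) +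
                  (Q.center i - z i) + (z i - Q'.center i)|
                ≤ |(x i - (parent Q).center i) + ((parent Q).center i - Q.center i) +
                  (Q.center i - z i)| + |z i - Q'.center i| := abs_add_le _ _
              _ ≤ |(x i - (parent Q).center i) + ((parent Q).center i - Q.center i)| +
                  |Q.center i - z i| + |z i - Q'.center i| := by
                    linarith [abs_add_le ((x i - (parent Q).center i) +
                      ((parent Q).center i - Q.center i)) (Q.center i - z i)]
              _ ≤ _ := by
                    linarith [abs_add_le (x i - (parent Q).center i)
                      ((parent Q).center i - Q.center i)]
    have h3' : |Q.center i - z i| ≤ 1 * Q.sidelength / 2 := by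
      rw [abs_sub_comm]; exact h3
    linarith
  exact hQ.2.2 (parent Q) hPsub (ssubset_parent hn Q) (hmono _ _ hPsub hQ'.1 hQ'.2.1 hdil)

end GoodGeomAux

/-- **Good geometry of CZ cubes.**  For any monotone `OK` predicate on dyadic subcubes of
`Q° = (0,1]^n`, if `Q, Q'` are CZ cubes whose closures intersect, then
`(1/2) δ_Q ≤ δ_{Q'} ≤ 2 δ_Q`. -/
theorem stmt10 (n : ℕ) (hn : 1 ≤ n) (OK : DyadicCube n → Prop) (hmono : OKmono OK)
    (Q Q' : DyadicCube n) (hQ : CZ OK Q) (hQ' : CZ OK Q')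
    (htouch : (closure Q.toSet ∩ closure Q'.toSet).Nonempty) :
    (1 / 2) * Q.sidelength ≤ Q'.sidelength ∧ Q'.sidelength ≤ 2 * Q.sidelength := by
  have htouch' : (closure Q'.toSet ∩ closure Q.toSet).Nonempty := by
    rwa [Set.inter_comm]
  have h1 := GoodGeomAux.half hn hmono hQ' hQ htouch'
  have h2 := GoodGeomAux.half hn hmono hQ hQ' htouch
  exact ⟨by linarith, h2⟩

end
end

section
/- More good geometry: (a) If Q, Q' are CZ cubes with (1.3)Q ∩ (1.3)Q' ≠ ∅, then their closures intersect (Q ↔ Q'); consequently each point of ℝ^n belongs to at most C(n) of the cubes 1.3Q with Q CZ. (b) If a CZ cube Q satisfies Cl(Q) ∩ ∂Q° ≠ ∅, then δ_Q ≥ (1/20)·δ_{Q°}. -/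
open MeasureTheory

noncomputable section

/-!
If a CZ cube `Q'` is much smaller than a CZ cube `Q` near it, then `3 (parent Q') ⊆ 3Q`, so by
monotonicity the parent of `Q'` is OK, contradicting the maximality of `Q'`. Hence CZ cubes whose
`1.3`-dilates meet differ in size by a factor at most `4`; for such dyadic cubes the lattice
structure forces the closures to touch, and only `5` scales with `2ⁿ` cubes each can have `x` in
their `1.3`-dilate. For (b), a CZ cube of side `< 1/20` touching `∂Q°` has a parent whose triple
misses `(1/10)Q° ⊇ supp μ`; that parent is then OK, again contradicting maximality.
-/

open Set

lemma Int.abs_le_of_abs_lt_add_two {m k : ℤ} (h : |m| < k + 2) (heven : Even (m + k)) :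
    |m| ≤ k := by
  obtain ⟨r, hr⟩ := heven
  rw [abs_lt] at h
  rw [abs_le]
  omega

namespace DyadicCube

variable {n : ℕ}

lemma sidelength_pos (Q : DyadicCube n) : 0 < Q.sidelength := zpow_pos two_pos _

lemma center_eq (Q : DyadicCube n) (i : Fin n) :
    Q.center i = Q.j i * Q.sidelength + Q.sidelength / 2 := by
  simp only [center, sidelength]; ring

@[simp] lemma sidelength_unitCube : (unitCube n).sidelength = 1 := zpow_zero 2

@[simp] lemma j_unitCube (i : Fin n) : (unitCube n).j i = 0 := rfl

@[simp] lemma center_unitCube (i : Fin n) : (unitCube n).center i = 1 / 2 := by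
  simp [center_eq]

lemma sidelength_eq_pow_mul {Q Q' : DyadicCube n} {d : ℕ} (hk : Q.k = Q'.k + d) :
    Q.sidelength = 2 ^ d * Q'.sidelength := by
  rw [sidelength, sidelength, hk, zpow_add₀ two_ne_zero, zpow_natCast, mul_comm]

lemma toSet_eq_pi (Q : DyadicCube n) :
    Q.toSet = univ.pi fun i => Ioc (Q.j i * Q.sidelength) ((Q.j i + 1) * Q.sidelength) := by
  ext x; simp [toSet, sidelength]

lemma closure_toSet (Q : DyadicCube n) : closure Q.toSet = Q.dilate 1 := by
  have hδ := Q.sidelength_pos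
  rw [toSet_eq_pi, closure_pi_set]
  ext x
  simp only [mem_pi, mem_univ, true_implies, dilate, mem_ofPred_eq]
  refine forall_congr' fun i => ?_
  rw [closure_Ioc (by nlinarith), mem_Icc, abs_le, center_eq]
  constructor <;> rintro ⟨h₁, h₂⟩ <;> constructor <;> linarith

lemma toSet_subset_toSet_iff {Q Q' : DyadicCube n} :
    Q.toSet ⊆ Q'.toSet ↔ ∀ i, Q'.j i * Q'.sidelength ≤ Q.j i * Q.sidelength ∧
      (Q.j i + 1) * Q.sidelength ≤ (Q'.j i + 1) * Q'.sidelength := by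
  have hδ := Q.sidelength_pos
  have hlt : ∀ i, (Q.j i : ℝ) * Q.sidelength < (Q.j i + 1) * Q.sidelength := fun i => by
    linarith
  rw [toSet_eq_pi, toSet_eq_pi, univ_pi_subset_univ_pi_iff]
  simp only [Ioc_subset_Ioc_iff (hlt _), Ioc_eq_empty_iff, hlt, not_true_eq_false, exists_false,
    or_false]
  exact forall_congr' fun i => and_comm

lemma subset_unitCube_iff {Q : DyadicCube n} :
    Q.toSet ⊆ (unitCube n).toSet ↔
      ∀ i, 0 ≤ Q.j i * Q.sidelength ∧ (Q.j i + 1) * Q.sidelength ≤ 1 := by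
  simp [toSet_subset_toSet_iff]

lemma sidelength_le_one (hn : 1 ≤ n) {Q : DyadicCube n} (hQ : Q.toSet ⊆ (unitCube n).toSet) :
    Q.sidelength ≤ 1 := by
  obtain ⟨h₀, h₁⟩ := subset_unitCube_iff.1 hQ ⟨0, hn⟩
  linarith

lemma exists_notMem_Ioo_of_mem_frontier {Q : DyadicCube n} {z : Fin n → ℝ}
    (hz : z ∈ frontier Q.toSet) :
    ∃ i, z i ∉ Ioo (Q.j i * Q.sidelength) ((Q.j i + 1) * Q.sidelength) := by
  by_contra! h
  have hint : (univ.pi fun i => Ioo (Q.j i * Q.sidelength) ((Q.j i + 1) * Q.sidelength)) ⊆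
      interior Q.toSet :=
    interior_maximal (toSet_eq_pi Q ▸ pi_mono fun _ _ => Ioo_subset_Ioc_self)
      (isOpen_set_pi finite_univ fun _ _ => isOpen_Ioo)
  exact hz.2 (hint fun i _ => h i)

def parent (Q : DyadicCube n) : DyadicCube n := ⟨Q.k + 1, fun i => Q.j i / 2⟩

lemma sidelength_parent (Q : DyadicCube n) : Q.parent.sidelength = 2 * Q.sidelength := by
  rw [parent, sidelength, sidelength, zpow_add_one₀ two_ne_zero, mul_comm]

lemma j_parent_bounds (Q : DyadicCube n) (i : Fin n) :
    2 * (Q.parent.j i : ℝ) ≤ Q.j i ∧ (Q.j i : ℝ) + 1 ≤ 2 * (Q.parent.j i + 1) := by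
  constructor <;> norm_cast <;> simp only [parent] <;> omega

lemma subset_parent (Q : DyadicCube n) : Q.toSet ⊆ Q.parent.toSet := by
  refine toSet_subset_toSet_iff.2 fun i => ?_
  rw [sidelength_parent]
  constructor <;> nlinarith [j_parent_bounds Q i, Q.sidelength_pos]

lemma toSet_ssubset_parent (hn : 1 ≤ n) (Q : DyadicCube n) : Q.toSet ⊂ Q.parent.toSet := by
  refine (subset_parent Q).ssubset_of_not_subset fun h => ?_
  obtain ⟨h₁, h₂⟩ := toSet_subset_toSet_iff.1 h ⟨0, hn⟩
  rw [sidelength_parent] at h₁ h₂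
  linarith [Q.sidelength_pos]

lemma parent_subset_unitCube {Q : DyadicCube n} (hQ : Q.toSet ⊆ (unitCube n).toSet)
    (hδ : Q.sidelength < 1) : Q.parent.toSet ⊆ (unitCube n).toSet := by
  have hk : Q.k < 0 := (zpow_lt_one_iff_right₀ one_lt_two).1 hδ
  obtain ⟨m, hm⟩ : ∃ m : ℕ, Q.parent.k = -m :=
    ⟨(-(Q.k + 1)).toNat, by simp only [parent]; omega⟩
  -- the faces of `Q°` lie on the lattice of mesh `δ_{parent Q} = 2⁻ᵐ`
  have hone : (2 : ℝ) ^ m * Q.parent.sidelength = 1 := by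
    rw [sidelength, hm, zpow_neg, zpow_natCast, mul_inv_cancel₀ (by positivity)]
  have hδ₀ := Q.sidelength_pos
  rw [sidelength_parent] at hone
  refine subset_unitCube_iff.2 fun i => ?_
  obtain ⟨h₀, h₁⟩ := subset_unitCube_iff.1 hQ i
  have hj₀ : (0 : ℤ) ≤ Q.j i := by exact_mod_cast nonneg_of_mul_nonneg_left h₀ hδ₀
  have hj₁ : Q.j i + 1 ≤ 2 * 2 ^ m := by
    have : ((Q.j i : ℝ) + 1) * Q.sidelength ≤ 2 * 2 ^ m * Q.sidelength := by linarith
    exact_mod_cast le_of_mul_le_mul_right this hδ₀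
  have hP₀ : (0 : ℤ) ≤ Q.parent.j i := by simp only [parent]; omega
  have hP₁ : Q.parent.j i + 1 ≤ (2 : ℤ) ^ m := by simp only [parent]; omega
  have hP₁' : (Q.parent.j i : ℝ) + 1 ≤ 2 ^ m := by exact_mod_cast hP₁
  rw [sidelength_parent]
  constructor
  · have : (0 : ℝ) ≤ Q.parent.j i := by exact_mod_cast hP₀
    positivity
  · nlinarith

lemma dilate_subset_dilate {Q Q' : DyadicCube n} {c c' : ℝ}
    (h : ∀ i, |Q.center i - Q'.center i| + c * Q.sidelength / 2 ≤ c' * Q'.sidelength / 2) :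
    Q.dilate c ⊆ Q'.dilate c' := fun x hx i => by
  linarith [hx i, h i, abs_sub_le (x i) (Q.center i) (Q'.center i)]

lemma dilate_three_parent_subset (Q : DyadicCube n) : Q.parent.dilate 3 ⊆ Q.dilate 7 := by
  refine dilate_subset_dilate fun i => ?_
  have ⟨h₁, h₂⟩ := j_parent_bounds Q i
  have hδ := Q.sidelength_pos
  have : |Q.parent.center i - Q.center i| ≤ Q.sidelength / 2 := by
    rw [center_eq, center_eq, sidelength_parent, abs_le]
    constructor <;> nlinarith
  rw [sidelength_parent]
  linarith

lemma abs_center_sub_center_le {Q Q' : DyadicCube n} {c c' : ℝ}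
    (h : (Q.dilate c ∩ Q'.dilate c').Nonempty) (i : Fin n) :
    |Q.center i - Q'.center i| ≤ (c * Q.sidelength + c' * Q'.sidelength) / 2 := by
  obtain ⟨x, hx, hx'⟩ := h
  linarith [hx i, hx' i, abs_sub_le (Q.center i) (x i) (Q'.center i),
    abs_sub_comm (Q.center i) (x i)]

lemma dilate_inter_nonempty {Q Q' : DyadicCube n} {c c' : ℝ} (hc : 0 ≤ c) (hc' : 0 ≤ c')
    (h : ∀ i, |Q.center i - Q'.center i| ≤ (c * Q.sidelength + c' * Q'.sidelength) / 2) :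
    (Q.dilate c ∩ Q'.dilate c').Nonempty := by
  have hδ := mul_nonneg hc Q.sidelength_pos.le
  have hδ' := mul_nonneg hc' Q'.sidelength_pos.le
  set x : Fin n → ℝ := fun i =>
    max (Q.center i - c * Q.sidelength / 2) (Q'.center i - c' * Q'.sidelength / 2)
  have hx : ∀ i, Q.center i - c * Q.sidelength / 2 ≤ x i ∧
      Q'.center i - c' * Q'.sidelength / 2 ≤ x i ∧
      x i ≤ Q.center i + c * Q.sidelength / 2 ∧ x i ≤ Q'.center i + c' * Q'.sidelength / 2 :=
    fun i => by
      obtain ⟨h₁, h₂⟩ := abs_le.1 (h i)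
      exact ⟨le_max_left _ _, le_max_right _ _, max_le (by linarith) (by linarith),
        max_le (by linarith) (by linarith)⟩
  exact ⟨x, fun i => abs_le.2 ⟨by linarith [hx i], by linarith [hx i]⟩,
    fun i => abs_le.2 ⟨by linarith [hx i], by linarith [hx i]⟩⟩

lemma two_mul_center_sub_center {Q Q' : DyadicCube n} {d : ℕ} (hk : Q.k = Q'.k + d)
    (i : Fin n) : 2 * (Q.center i - Q'.center i) =
      (((2 * Q.j i + 1) * 2 ^ d - (2 * Q'.j i + 1) : ℤ) : ℝ) * Q'.sidelength := by
  rw [center_eq, center_eq, sidelength_eq_pow_mul hk]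
  push_cast
  ring

/-- In units of `δ_{Q'}`, twice the distance between the centers is an integer `m` of the
parity of `N + 1`, where `N = δ_Q / δ_{Q'} ≤ 4`; so `|m| ≤ 1.3 (N + 1) < N + 3` forces
`|m| ≤ N + 1`. -/
lemma abs_center_sub_center_le_of_dilate_inter {Q Q' : DyadicCube n} {d : ℕ}
    (hk : Q.k = Q'.k + d) (hd : d ≤ 2)
    (hmeet : (Q.dilate (13 / 10) ∩ Q'.dilate (13 / 10)).Nonempty) (i : Fin n) :
    |Q.center i - Q'.center i| ≤ (1 * Q.sidelength + 1 * Q'.sidelength) / 2 := by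
  have hδ' := Q'.sidelength_pos
  have hN : (2 : ℝ) ^ d ≤ 4 := by
    calc (2 : ℝ) ^ d ≤ 2 ^ 2 := pow_le_pow_right₀ one_le_two hd
      _ = 4 := by norm_num
  have hδ := sidelength_eq_pow_mul hk
  set m : ℤ := (2 * Q.j i + 1) * 2 ^ d - (2 * Q'.j i + 1)
  have habs : 2 * |Q.center i - Q'.center i| = |(m : ℝ)| * Q'.sidelength := by
    rw [← abs_two, ← abs_mul, two_mul_center_sub_center hk, abs_mul, abs_of_pos hδ']
  have hm : |(m : ℝ)| * Q'.sidelength ≤ 13 / 10 * (2 ^ d + 1) * Q'.sidelength := by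
    have := abs_center_sub_center_le hmeet i
    rw [hδ] at this
    linarith
  have hm' : |m| ≤ 2 ^ d + 1 := by
    refine Int.abs_le_of_abs_lt_add_two ?_ ⟨(Q.j i + 1) * 2 ^ d - Q'.j i, by ring⟩
    have := le_of_mul_le_mul_right hm hδ'
    have : ((|m| : ℤ) : ℝ) < ((2 ^ d + 1 + 2 : ℤ) : ℝ) := by push_cast; linarith
    exact_mod_cast this
  have hmR : |(m : ℝ)| ≤ 2 ^ d + 1 := by exact_mod_cast hm'
  rw [hδ]
  nlinarith

/-- `x ∈ 1.3Q` means `x i / δ_Q ∈ [Q.j i - 3/20, Q.j i + 23/20]`, which leaves two values of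
`Q.j i` in each coordinate. -/
def dilateCandidates (x : Fin n → ℝ) (k : ℤ) : Finset (DyadicCube n) :=
  (Fintype.piFinset fun i =>
    Finset.Icc (⌊x i / 2 ^ k + 3 / 20⌋ - 1) ⌊x i / 2 ^ k + 3 / 20⌋).map
      ⟨mk k, fun _ _ h => (mk.inj h).2⟩

lemma card_dilateCandidates (x : Fin n → ℝ) (k : ℤ) :
    (dilateCandidates x k).card = 2 ^ n := by
  simp [dilateCandidates]

lemma mem_dilateCandidates {Q : DyadicCube n} {x : Fin n → ℝ} (hx : x ∈ Q.dilate (13 / 10)) :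
    Q ∈ dilateCandidates x Q.k := by
  refine Finset.mem_map.2 ⟨Q.j, Fintype.mem_piFinset.2 fun i => ?_, rfl⟩
  have hδ := Q.sidelength_pos
  obtain ⟨h₁, h₂⟩ := abs_le.1 (hx i)
  rw [center_eq] at h₁ h₂
  have hlo : (Q.j i : ℝ) ≤ x i / Q.sidelength + 3 / 20 := by
    have : (Q.j i - 3 / 20 : ℝ) ≤ x i / Q.sidelength := by rw [le_div_iff₀ hδ]; linarith
    linarith
  have hhi : x i / Q.sidelength + 3 / 20 < Q.j i + 2 := by
    have : x i / Q.sidelength < Q.j i + 2 - 3 / 20 := by rw [div_lt_iff₀ hδ]; linarith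
    linarith
  have hlo' : Q.j i ≤ ⌊x i / 2 ^ Q.k + 3 / 20⌋ := Int.le_floor.2 hlo
  have hhi' : ⌊x i / 2 ^ Q.k + 3 / 20⌋ < Q.j i + 2 := Int.floor_lt.2 (by exact_mod_cast hhi)
  exact Finset.mem_Icc.2 ⟨by omega, hlo'⟩

end DyadicCube

open DyadicCube

namespace CZ

variable {n : ℕ} {OK : DyadicCube n → Prop} {Q Q' : DyadicCube n}

lemma not_ok_parent (hn : 1 ≤ n) (hQ : CZ OK Q) (hP : Q.parent.toSet ⊆ (unitCube n).toSet) :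
    ¬ OK Q.parent :=
  hQ.2.2 _ hP (toSet_ssubset_parent hn Q)

lemma k_le_add_two (hmono : OKmono OK) (hn : 1 ≤ n) (hQ : CZ OK Q) (hQ' : CZ OK Q')
    (hmeet : (Q.dilate (13 / 10) ∩ Q'.dilate (13 / 10)).Nonempty) : Q.k ≤ Q'.k + 2 := by
  by_contra! hk
  have h8 : 8 * Q'.sidelength ≤ Q.sidelength := by
    obtain ⟨d, hd⟩ : ∃ d : ℕ, Q.k = Q'.k + d := ⟨(Q.k - Q'.k).toNat, by omega⟩
    rw [sidelength_eq_pow_mul hd]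
    refine mul_le_mul_of_nonneg_right ?_ Q'.sidelength_pos.le
    calc (8 : ℝ) = 2 ^ 3 := by norm_num
      _ ≤ 2 ^ d := pow_le_pow_right₀ one_le_two (by omega)
  have hP : Q'.parent.toSet ⊆ (unitCube n).toSet :=
    parent_subset_unitCube hQ'.1 (by linarith [sidelength_le_one hn hQ.1, Q'.sidelength_pos])
  -- a CZ cube much smaller than a nearby OK cube `Q` would have its parent OK by monotonicity
  refine hQ'.not_ok_parent hn hP (hmono _ _ hP hQ.1 hQ.2.1 ?_)
  refine (dilate_three_parent_subset Q').trans (dilate_subset_dilate fun i => ?_)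
  linarith [abs_center_sub_center_le hmeet i, abs_sub_comm (Q.center i) (Q'.center i),
    Q'.sidelength_pos]

lemma closure_inter_closure_nonempty (hmono : OKmono OK) (hn : 1 ≤ n) (hQ : CZ OK Q)
    (hQ' : CZ OK Q') (hmeet : (Q.dilate (13 / 10) ∩ Q'.dilate (13 / 10)).Nonempty) :
    (closure Q.toSet ∩ closure Q'.toSet).Nonempty := by
  wlog hk : Q'.k ≤ Q.k generalizing Q Q'
  · rw [inter_comm] at hmeet ⊢
    exact this hQ' hQ hmeet (by omega)
  obtain ⟨d, hd⟩ : ∃ d : ℕ, Q.k = Q'.k + d := ⟨(Q.k - Q'.k).toNat, by omega⟩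
  have hd2 : d ≤ 2 := by have := hQ.k_le_add_two hmono hn hQ' hmeet; omega
  rw [closure_toSet, closure_toSet]
  exact dilate_inter_nonempty zero_le_one zero_le_one
    (abs_center_sub_center_le_of_dilate_inter hd hd2 hmeet)

lemma finite_and_ncard_le (hmono : OKmono OK) (hn : 1 ≤ n) (x : Fin n → ℝ) :
    {Q : DyadicCube n | CZ OK Q ∧ x ∈ Q.dilate (13 / 10)}.Finite ∧
      {Q : DyadicCube n | CZ OK Q ∧ x ∈ Q.dilate (13 / 10)}.ncard ≤ 5 * 2 ^ n := by
  classical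
  set S := {Q : DyadicCube n | CZ OK Q ∧ x ∈ Q.dilate (13 / 10)}
  rcases S.eq_empty_or_nonempty with hS | ⟨Q₀, hQ₀⟩
  · simp [hS]
  set T := (Finset.Icc (Q₀.k - 2) (Q₀.k + 2)).biUnion (dilateCandidates x)
  have hST : S ⊆ T := fun Q hQ => by
    have h₁ := hQ.1.k_le_add_two hmono hn hQ₀.1 ⟨x, hQ.2, hQ₀.2⟩
    have h₂ := hQ₀.1.k_le_add_two hmono hn hQ.1 ⟨x, hQ₀.2, hQ.2⟩
    exact Finset.mem_biUnion.2 ⟨Q.k, Finset.mem_Icc.2 ⟨by omega, by omega⟩,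
      mem_dilateCandidates hQ.2⟩
  refine ⟨T.finite_toSet.subset hST, ?_⟩
  calc S.ncard ≤ (T : Set (DyadicCube n)).ncard := ncard_le_ncard hST T.finite_toSet
    _ = T.card := ncard_coe_finset T
    _ ≤ ∑ k ∈ Finset.Icc (Q₀.k - 2) (Q₀.k + 2), (dilateCandidates x k).card :=
      Finset.card_biUnion_le
    _ = 5 * 2 ^ n := by
      simp only [card_dilateCandidates, Finset.sum_const, Int.card_Icc, smul_eq_mul]
      rw [show (Q₀.k + 2 + 1 - (Q₀.k - 2)).toNat = 5 by omega]

lemma one_div_twenty_le_sidelength (hn : 1 ≤ n) (hQ : CZ OK Q) {μ : Measure (Fin n → ℝ)}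
    (hμ : μ ((unitCube n).dilate (1 / 10))ᶜ = 0)
    (hμOK : ∀ Q : DyadicCube n, Q.toSet ⊆ (unitCube n).toSet → μ (Q.dilate 3) = 0 → OK Q)
    (hz : (closure Q.toSet ∩ frontier (unitCube n).toSet).Nonempty) :
    1 / 20 ≤ Q.sidelength := by
  by_contra! hδ
  obtain ⟨z, hzQ, hzF⟩ := hz
  obtain ⟨i, hi⟩ := exists_notMem_Ioo_of_mem_frontier hzF
  have hP := parent_subset_unitCube hQ.1 (by linarith)
  refine hQ.not_ok_parent hn hP (hμOK _ hP (measure_mono_null ?_ hμ))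
  -- `3 (parent Q)` stays within `4 δ_Q < 1/5` of the face through `z`, hence misses `(1/10)Q°`
  intro w hw hw₀
  refine hi ?_
  rw [closure_toSet] at hzQ
  have hw₇ := dilate_three_parent_subset Q hw i
  simp only [dilate, mem_ofPred_eq, center_unitCube, sidelength_unitCube] at hw₀ hzQ hw₇
  obtain ⟨h₁, h₂⟩ := abs_le.1 (hw₀ i)
  obtain ⟨h₃, h₄⟩ := abs_le.1 (hzQ i)
  obtain ⟨h₅, h₆⟩ := abs_le.1 hw₇
  simp only [j_unitCube, sidelength_unitCube, Int.cast_zero, zero_mul, zero_add, one_mul,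
    mem_Ioo]
  constructor <;> linarith

end CZ

/-- **More good geometry of CZ cubes.**  Suppose `OK` is monotone, `supp μ ⊆ (1/10)Q°`, and
every dyadic subcube `Q` of `Q°` with `μ(3Q) = 0` is OK.  Then:
(a) if `Q, Q'` are CZ cubes with `1.3Q ∩ 1.3Q' ≠ ∅` then their closures intersect;
consequently each point of `ℝ^n` lies in at most `C(n)` of the cubes `1.3Q`, `Q` CZ;
(b) if a CZ cube `Q` satisfies `Cl(Q) ∩ ∂Q° ≠ ∅`, then `δ_Q ≥ (1/20) δ_{Q°}`. -/
theorem stmt11 (n : ℕ) (hn : 1 ≤ n) :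
    ∃ C : ℕ, ∀ OK : DyadicCube n → Prop, OKmono OK →
      ∀ μ : Measure (Fin n → ℝ),
        μ (((unitCube n).dilate (1 / 10))ᶜ) = 0 →
        (∀ Q : DyadicCube n, Q.toSet ⊆ (unitCube n).toSet → μ (Q.dilate 3) = 0 → OK Q) →
        (∀ Q Q' : DyadicCube n, CZ OK Q → CZ OK Q' →
            (Q.dilate (13 / 10) ∩ Q'.dilate (13 / 10)).Nonempty →
            (closure Q.toSet ∩ closure Q'.toSet).Nonempty) ∧
        (∀ x : Fin n → ℝ,
            {Q : DyadicCube n | CZ OK Q ∧ x ∈ Q.dilate (13 / 10)}.Finite ∧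
            {Q : DyadicCube n | CZ OK Q ∧ x ∈ Q.dilate (13 / 10)}.ncard ≤ C) ∧
        (∀ Q : DyadicCube n, CZ OK Q →
            (closure Q.toSet ∩ frontier (unitCube n).toSet).Nonempty →
            (1 / 20) * (unitCube n).sidelength ≤ Q.sidelength) := by
  refine ⟨5 * 2 ^ n, fun OK hmono μ hμ hμOK => ⟨?_, ?_, ?_⟩⟩
  · exact fun Q Q' hQ hQ' => hQ.closure_inter_closure_nonempty hmono hn hQ'
  · exact CZ.finite_and_ncard_le hmono hn
  · intro Q hQ hz
    rw [sidelength_unitCube, mul_one]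
    exact hQ.one_div_twenty_le_sidelength hn hμ hμOK hz
end
end

section
/- Bounded overlap of dilated keystone cubes: if Q_s is a keystone cube, then the number of keystone cubes Q_{s'} with 10Q_s ∩ 10Q_{s'} ≠ ∅ is at most C, a constant depending only on n. -/
noncomputable section

lemma aux_sidelength_pos {n : ℕ} (Q : DyadicCube n) : 0 < Q.sidelength :=
  zpow_pos (by norm_num) _

lemma aux_center_mem {n : ℕ} (Q : DyadicCube n) : Q.center ∈ Q.toSet := by
  intro i
  have h : (0:ℝ) < 2 ^ Q.k := zpow_pos (by norm_num) _
  unfold DyadicCube.center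
  constructor <;> nlinarith

lemma aux_mem_dist {n : ℕ} (Q : DyadicCube n) {x : Fin n → ℝ} (hx : x ∈ Q.toSet) (i : Fin n) :
    |x i - Q.center i| ≤ Q.sidelength / 2 := by
  have h := hx i
  have h2 : (0:ℝ) < 2 ^ Q.k := zpow_pos (by norm_num) _
  rw [abs_le]
  unfold DyadicCube.center DyadicCube.sidelength
  constructor <;> nlinarith [h.1, h.2]

lemma aux_pow_inj {a b : ℤ} (h : (2:ℝ) ^ a = 2 ^ b) : a = b :=
  zpow_right_injective₀ (by norm_num : (0:ℝ) < 2) (by norm_num : (2:ℝ) ≠ 1) h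

lemma key_eq {n : ℕ} (OK : DyadicCube n → Prop) (Qs Q : DyadicCube n)
    (hQs : Keystone OK Qs) (hQ : Keystone OK Q)
    (hne : (Qs.dilate 10 ∩ Q.dilate 10).Nonempty) :
    Q.k = Qs.k ∧ ∀ i, |Q.j i - Qs.j i| ≤ 10 := by
  obtain ⟨x, hx1, hx2⟩ := hne
  have hds := aux_sidelength_pos Qs
  have hd := aux_sidelength_pos Q
  have hcent : ∀ i, |Q.center i - Qs.center i| ≤ 5 * Q.sidelength + 5 * Qs.sidelength := by
    intro i
    have h1 := hx1 i
    have h2 := hx2 i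
    have h3 : |Q.center i - Qs.center i| ≤ |Q.center i - x i| + |x i - Qs.center i| :=
      abs_sub_le _ _ _
    rw [abs_sub_comm (Q.center i) (x i)] at h3
    linarith
  have hside : Q.sidelength = Qs.sidelength := by
    rcases le_total Qs.sidelength Q.sidelength with hle | hle
    · refine le_antisymm ?_ hle
      refine hQ.2 Qs hQs.1 ⟨Qs.center, aux_center_mem Qs, fun i => ?_⟩
      have h1 := aux_mem_dist Qs (aux_center_mem Qs) i
      have h2 := hcent i
      have h3 : |Qs.center i - Q.center i| ≤ |Qs.center i - Qs.center i| + |Qs.center i - Q.center i| := by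
        simp
      calc |Qs.center i - Q.center i| = |Q.center i - Qs.center i| := abs_sub_comm _ _
        _ ≤ 5 * Q.sidelength + 5 * Qs.sidelength := h2
        _ ≤ 100 * Q.sidelength / 2 := by linarith
    · refine le_antisymm hle ?_
      refine hQs.2 Q hQ.1 ⟨Q.center, aux_center_mem Q, fun i => ?_⟩
      have h2 := hcent i
      calc |Q.center i - Qs.center i| ≤ 5 * Q.sidelength + 5 * Qs.sidelength := h2
        _ ≤ 100 * Qs.sidelength / 2 := by linarith
  have hk : Q.k = Qs.k := aux_pow_inj hside
  refine ⟨hk, fun i => ?_⟩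
  have h := hcent i
  rw [hside] at h
  have hc : Q.center i - Qs.center i = ((Q.j i : ℝ) - Qs.j i) * Qs.sidelength := by
    unfold DyadicCube.center DyadicCube.sidelength
    rw [hk]; ring
  rw [hc, abs_mul, abs_of_pos hds] at h
  have h10 : |((Q.j i : ℝ)) - Qs.j i| ≤ 10 := by
    nlinarith [abs_nonneg ((Q.j i : ℝ) - Qs.j i)]
  have h10' : |((Q.j i - Qs.j i : ℤ) : ℝ)| ≤ 10 := by push_cast; exact h10
  exact_mod_cast h10'

/-- **Bounded overlap of dilated keystone cubes (Lemma `10q`).**  There is a constant `C`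
depending only on `n` such that for every keystone cube `Q_s`, the number of keystone cubes
`Q_{s'}` with `10Q_s ∩ 10Q_{s'} ≠ ∅` is at most `C`. -/
theorem stmt12 (n : ℕ) (hn : 1 ≤ n) :
    ∃ C : ℕ, ∀ (OK : DyadicCube n → Prop) (Qs : DyadicCube n), Keystone OK Qs →
      {Q : DyadicCube n | Keystone OK Q ∧ (Qs.dilate 10 ∩ Q.dilate 10).Nonempty}.Finite ∧
      {Q : DyadicCube n | Keystone OK Q ∧ (Qs.dilate 10 ∩ Q.dilate 10).Nonempty}.ncard ≤ C := by
  classical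
  refine ⟨21 ^ n, fun OK Qs hQs => ?_⟩
  set T : Finset (DyadicCube n) :=
    (Fintype.piFinset fun i => Finset.Icc (Qs.j i - 10) (Qs.j i + 10)).image
      (fun j => ⟨Qs.k, j⟩) with hT
  have hsub : {Q : DyadicCube n | Keystone OK Q ∧ (Qs.dilate 10 ∩ Q.dilate 10).Nonempty} ⊆ ↑T := by
    rintro Q ⟨hQ, hne⟩
    obtain ⟨hk, hj⟩ := key_eq OK Qs Q hQs hQ hne
    rw [hT]
    simp only [Finset.coe_image, Set.mem_image, Finset.mem_coe, Fintype.mem_piFinset,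
      Finset.mem_Icc]
    refine ⟨Q.j, fun i => ?_, ?_⟩
    · have h := hj i
      rw [abs_le] at h
      omega
    · obtain ⟨k, j⟩ := Q
      cases hk
      rfl
  have hTcard : T.card ≤ 21 ^ n := by
    refine le_trans (Finset.card_image_le) ?_
    rw [Fintype.card_piFinset]
    have h21 : ∀ i : Fin n, (Finset.Icc (Qs.j i - 10) (Qs.j i + 10)).card = 21 := by
      intro i
      rw [Int.card_Icc]
      omega
    rw [Finset.prod_congr rfl (fun i _ => h21 i), Finset.prod_const, Finset.card_univ,
      Fintype.card_fin]
  refine ⟨T.finite_toSet.subset hsub, ?_⟩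
  calc {Q : DyadicCube n | Keystone OK Q ∧ (Qs.dilate 10 ∩ Q.dilate 10).Nonempty}.ncard
      ≤ (↑T : Set (DyadicCube n)).ncard := Set.ncard_le_ncard hsub T.finite_toSet
    _ = T.card := Set.ncard_coe_finset T
    _ ≤ 21 ^ n := hTcard


end
end

section
/- The set of keystone points K_p = Q° \ ⋃{Q : Q CZ} is closed in ℝ^n. Moreover, every x ∈ K_p satisfies μ(B(x,η)) = ∞ for all η > 0, and K_p ⊆ Cl((1/10)Q°). -/
open MeasureTheory
open scoped ENNReal

noncomputable section

namespace Aux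

lemma two_zpow_pos (k : ℤ) : (0:ℝ) < 2 ^ k := zpow_pos (by norm_num) k

/-- The dyadic cube of scale `k` containing `x`. -/
def D {n : ℕ} (x : Fin n → ℝ) (k : ℤ) : DyadicCube n := ⟨k, fun i => ⌈x i / 2^k⌉ - 1⟩

lemma mem_D {n : ℕ} (x : Fin n → ℝ) (k : ℤ) : x ∈ (D x k).toSet := by
  intro i
  have h2 := two_zpow_pos k
  have hc1 : (⌈x i / 2^k⌉ : ℝ) - 1 < x i / 2^k := by
    have := Int.ceil_lt_add_one (x i / 2^k); linarith
  have hc2 : x i / 2^k ≤ (⌈x i / 2^k⌉ : ℝ) := Int.le_ceil _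
  constructor
  · have : ((⌈x i / 2^k⌉ - 1 : ℤ) : ℝ) < x i / 2^k := by push_cast; linarith
    have := (lt_div_iff₀ h2).mp this
    simpa [D] using this
  · have : x i / 2^k ≤ ((⌈x i / 2^k⌉ - 1 : ℤ) : ℝ) + 1 := by push_cast; linarith
    have := (div_le_iff₀ h2).mp this
    simpa [D] using this

lemma center_dist {n : ℕ} {Q : DyadicCube n} {x : Fin n → ℝ} (hx : x ∈ Q.toSet) (i : Fin n) :
    |x i - Q.center i| ≤ Q.sidelength / 2 := by
  obtain ⟨h1, h2⟩ := hx i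
  have h2p := two_zpow_pos Q.k
  rw [abs_le]
  unfold DyadicCube.center DyadicCube.sidelength
  constructor <;> nlinarith

/-- Uniqueness of the dyadic cube of a given scale containing `x`. -/
lemma uniq {n : ℕ} {Q : DyadicCube n} {x : Fin n → ℝ} (hx : x ∈ Q.toSet) : Q = D x Q.k := by
  obtain ⟨k, j⟩ := Q
  simp only [D, DyadicCube.mk.injEq, true_and]
  refine funext fun i => ?_
  obtain ⟨h1, h2⟩ := hx i
  have h2p := two_zpow_pos k
  have : ⌈x i / 2^k⌉ = j i + 1 := by
    rw [Int.ceil_eq_iff]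
    constructor
    · push_cast
      have : (j i : ℝ) < x i / 2^k := (lt_div_iff₀ h2p).mpr h1
      linarith
    · push_cast
      exact (div_le_iff₀ h2p).mpr h2
  omega

lemma ioc_subset {n : ℕ} {Q Q' : DyadicCube n} (h : Q.toSet ⊆ Q'.toSet) (i : Fin n) :
    Set.Ioc ((Q.j i : ℝ) * 2^Q.k) (((Q.j i : ℝ) + 1) * 2^Q.k) ⊆
      Set.Ioc ((Q'.j i : ℝ) * 2^Q'.k) (((Q'.j i : ℝ) + 1) * 2^Q'.k) := by
  intro t ht
  classical
  set x : Fin n → ℝ := fun i' => if i' = i then t else ((Q.j i' : ℝ) + 1) * 2^Q.k with hxdef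
  have hx : x ∈ Q.toSet := by
    intro i'
    by_cases hi : i' = i
    · subst hi; simp only [hxdef, if_pos rfl]; exact ⟨ht.1, ht.2⟩
    · simp only [hxdef, if_neg hi]
      exact ⟨by nlinarith [two_zpow_pos Q.k], le_refl _⟩
  have := h hx i
  simpa [hxdef] using this

lemma k_le_of_subset {n : ℕ} (hn : 1 ≤ n) {Q Q' : DyadicCube n} (h : Q.toSet ⊆ Q'.toSet) :
    Q.k ≤ Q'.k := by
  have i : Fin n := ⟨0, hn⟩
  have hlt : (Q.j i : ℝ) * 2^Q.k < ((Q.j i : ℝ) + 1) * 2^Q.k := by nlinarith [two_zpow_pos Q.k]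
  have h1 := (Set.Ioc_subset_Ioc_iff hlt).mp (ioc_subset h i)
  have hlen : (2:ℝ)^Q.k ≤ 2^Q'.k := by nlinarith [h1.1, h1.2]
  exact (zpow_le_zpow_iff_right₀ (by norm_num : (1:ℝ) < 2)).mp hlen

lemma k_nonpos {n : ℕ} (hn : 1 ≤ n) {Q : DyadicCube n} (h : Q.toSet ⊆ (unitCube n).toSet) :
    Q.k ≤ 0 := k_le_of_subset hn h

lemma k_lt_of_ssubset {n : ℕ} (hn : 1 ≤ n) {Q Q' : DyadicCube n} (h : Q.toSet ⊂ Q'.toSet) :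
    Q.k < Q'.k := by
  have hle := k_le_of_subset hn h.subset
  rcases lt_or_eq_of_le hle with h' | h'
  · exact h'
  exfalso
  apply h.ne
  have hj : Q.j = Q'.j := by
    funext i
    have hlt : (Q.j i : ℝ) * 2^Q.k < ((Q.j i : ℝ) + 1) * 2^Q.k := by nlinarith [two_zpow_pos Q.k]
    have h1 := (Set.Ioc_subset_Ioc_iff hlt).mp (ioc_subset h.subset i)
    rw [← h'] at h1
    have h2p := two_zpow_pos Q.k
    have : (Q.j i : ℝ) = (Q'.j i : ℝ) := by nlinarith [h1.1, h1.2]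
    exact_mod_cast this
  have : Q = Q' := by
    obtain ⟨k, j⟩ := Q; obtain ⟨k', j'⟩ := Q'
    simp_all
  rw [this]

lemma D_subset_unit {n : ℕ} {x : Fin n → ℝ} (hx : x ∈ (unitCube n).toSet) {k : ℤ} (hk : k ≤ 0) :
    (D x k).toSet ⊆ (unitCube n).toSet := by
  intro z hz i
  obtain ⟨h1, h2⟩ := hz i
  obtain ⟨hx1, hx2⟩ := hx i
  simp only [unitCube] at hx1 hx2 ⊢
  norm_num at hx1 hx2 ⊢
  have h2p := two_zpow_pos k
  have hceil1 : 1 ≤ ⌈x i / 2^k⌉ := by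
    apply Int.one_le_ceil_iff.mpr
    positivity
  have hcast : (2:ℝ) ^ (-k) = ((2 ^ (-k).toNat : ℤ) : ℝ) := by
    push_cast
    rw [← zpow_natCast, Int.toNat_of_nonneg (by omega)]
  have hceil2 : ⌈x i / 2^k⌉ ≤ 2 ^ (-k).toNat := by
    apply Int.ceil_le.mpr
    rw [← hcast]
    rw [div_le_iff₀ h2p, ← zpow_add₀ (by norm_num : (2:ℝ) ≠ 0)]
    simpa using hx2
  constructor
  · have hj : (0:ℝ) ≤ ((⌈x i / 2^k⌉ - 1 : ℤ) : ℝ) := by exact_mod_cast (by omega : (0:ℤ) ≤ ⌈x i / 2^k⌉ - 1)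
    simp only [D] at h1
    nlinarith
  · simp only [D] at h2
    have : (((⌈x i / 2^k⌉ - 1 : ℤ) : ℝ) + 1) ≤ (2:ℝ)^(-k) := by
      rw [hcast]; exact_mod_cast (by omega : ⌈x i / 2^k⌉ - 1 + 1 ≤ 2 ^ (-k).toNat)
    calc z i ≤ (((⌈x i / 2^k⌉ - 1 : ℤ) : ℝ) + 1) * 2^k := h2
    _ ≤ 2^(-k) * 2^k := by nlinarith
    _ = 1 := by rw [← zpow_add₀ (by norm_num : (2:ℝ) ≠ 0)]; simp

lemma exists_CZ {n : ℕ} (hn : 1 ≤ n) (OK : DyadicCube n → Prop) {x : Fin n → ℝ}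
    (hx : x ∈ (unitCube n).toSet) {k₀ : ℤ} (hk₀ : k₀ ≤ 0) (hOK : OK (D x k₀)) :
    x ∈ KCZ OK := by
  obtain ⟨K, ⟨hK1, hK0, hKOK⟩, hmax⟩ := Int.exists_greatest_of_bdd
    (P := fun k => k₀ ≤ k ∧ k ≤ 0 ∧ OK (D x k))
    ⟨0, fun z hz => hz.2.1⟩ ⟨k₀, le_refl _, hk₀, hOK⟩
  refine Set.mem_iUnion.2 ⟨D x K, Set.mem_iUnion.2 ⟨⟨D_subset_unit hx hK0, hKOK, ?_⟩, mem_D x K⟩⟩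
  intro Q' hQ'sub hss hOK'
  have hk' : K < Q'.k := k_lt_of_ssubset hn hss
  have hx' : x ∈ Q'.toSet := hss.subset (mem_D x K)
  have hQ'eq : Q' = D x Q'.k := uniq hx'
  have h0 : Q'.k ≤ 0 := k_nonpos hn hQ'sub
  have := hmax Q'.k ⟨by omega, h0, hQ'eq ▸ hOK'⟩
  omega

lemma dilate_D_dist {n : ℕ} (x : Fin n → ℝ) (k : ℤ) {z : Fin n → ℝ}
    (hz : z ∈ (D x k).dilate 3) : dist z x ≤ 2 * 2^k := by
  rw [dist_pi_le_iff (by positivity)]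
  intro i
  have h1 := hz i
  have h2 := center_dist (mem_D x k) i
  have hs : (D x k).sidelength = 2^k := rfl
  rw [hs] at h1 h2
  rw [Real.dist_eq]
  have := abs_sub_le (z i) ((D x k).center i) (x i)
  rw [abs_sub_comm (x i)] at h2
  linarith

lemma exists_scale (ε : ℝ) (hε : 0 < ε) : ∃ k : ℤ, k ≤ 0 ∧ (2:ℝ)^k ≤ ε := by
  obtain ⟨N, hN⟩ := exists_pow_lt_of_lt_one hε (by norm_num : (1/2:ℝ) < 1)
  refine ⟨-(N:ℤ), by simp, ?_⟩
  rw [zpow_neg, zpow_natCast]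
  calc ((2:ℝ)^N)⁻¹ = (1/2:ℝ)^N := by rw [one_div, inv_pow]
  _ ≤ ε := hN.le

lemma dilate_closed {n : ℕ} (Q : DyadicCube n) (c : ℝ) : IsClosed (Q.dilate c) := by
  have : Q.dilate c = ⋂ i, {x : Fin n → ℝ | |x i - Q.center i| ≤ c * Q.sidelength / 2} := by
    ext z; simp [DyadicCube.dilate, Set.mem_iInter]
  rw [this]
  exact isClosed_iInter fun i =>
    isClosed_le (((continuous_apply i).sub continuous_const).abs) continuous_const

lemma small_subset_unit {n : ℕ} : (unitCube n).dilate (1/10) ⊆ (unitCube n).toSet := by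
  intro x hx i
  have h := hx i
  simp only [unitCube, DyadicCube.center, DyadicCube.sidelength] at h ⊢
  norm_num at h ⊢
  rw [abs_le] at h
  constructor <;> linarith [h.1, h.2]

end Aux

open Aux

/-- **The set of keystone points is closed (Lemma `kpclosed`).**  Let `μ` be a Borel regular
measure with `supp μ ⊆ (1/10)Q°`, let `OK` be monotone, and suppose every dyadic subcube `Q`
of `Q°` with `μ(3Q) ≤ (ε₀/C₀)^p (30 δ_Q)^{n−mp}` is OK (note `n − mp < 0` since `p > n`).
Then `K_p = Q° \ ⋃{Q : Q CZ}` is closed in `ℝ^n`; every `x ∈ K_p` satisfies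
`μ(B(x,η)) = ∞` for all `η > 0`; and `K_p ⊆ Cl((1/10)Q°)`. -/
theorem stmt13 (n m : ℕ) (hn : 1 ≤ n) (hm : 1 ≤ m) (p : ℝ) (hp : (n : ℝ) < p)
    (ε₀ C₀ : ℝ) (hε₀ : 0 < ε₀) (hC₀ : 0 < C₀)
    (μ : Measure (Fin n → ℝ)) (OK : DyadicCube n → Prop)
    (hmono : OKmono OK)
    (hsupp : μ (((unitCube n).dilate (1 / 10))ᶜ) = 0)
    (hsmall : ∀ Q : DyadicCube n, Q.toSet ⊆ (unitCube n).toSet →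
      μ (Q.dilate 3) ≤
        ENNReal.ofReal ((ε₀ / C₀) ^ p * (30 * Q.sidelength) ^ ((n : ℝ) - (m : ℝ) * p)) →
      OK Q) :
    IsClosed (Kp OK) ∧
    (∀ x ∈ Kp OK, ∀ η : ℝ, 0 < η → μ (Metric.ball x η) = ⊤) ∧
    Kp OK ⊆ closure ((unitCube n).dilate (1 / 10)) := by
  set e : ℝ := (n : ℝ) - (m : ℝ) * p with he_def
  have he : e < 0 := by
    have h1 : (1:ℝ) ≤ (m:ℝ) := by exact_mod_cast hm
    have hp0 : (0:ℝ) < p := lt_of_le_of_lt (by positivity) hp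
    nlinarith
  set c : ℝ := (ε₀ / C₀) ^ p with hc_def
  have hc : 0 < c := Real.rpow_pos_of_pos (div_pos hε₀ hC₀) p
  -- Key: locally finite measure implies membership in KCZ
  have keyfin : ∀ x ∈ (unitCube n).toSet, ∀ η : ℝ, 0 < η →
      μ (Metric.ball x η) ≠ ⊤ → x ∈ KCZ OK := by
    intro x hx η hη hfin
    set M : ℝ := (μ (Metric.ball x η)).toReal with hM_def
    have hball : μ (Metric.ball x η) = ENNReal.ofReal M := (ENNReal.ofReal_toReal hfin).symm
    have key : ∃ τ : ℝ, 0 < τ ∧ ∀ t : ℝ, 0 < t → t ≤ τ → M ≤ c * (30 * t) ^ e := by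
      rcases le_or_gt M 0 with hM | hM
      · refine ⟨1, one_pos, fun t ht _ => hM.trans ?_⟩
        have : (0:ℝ) < (30 * t) ^ e := Real.rpow_pos_of_pos (by positivity) e
        positivity
      · refine ⟨(M / c) ^ e⁻¹ / 30, by positivity, fun t ht hle => ?_⟩
        have hb : 30 * t ≤ (M / c) ^ e⁻¹ := by linarith
        have h1 : ((M / c) ^ e⁻¹) ^ e ≤ (30 * t) ^ e :=
          Real.rpow_le_rpow_of_nonpos (by positivity) hb he.le
        have h2 : ((M / c) ^ e⁻¹) ^ e = M / c := by
          rw [← Real.rpow_mul (by positivity), inv_mul_cancel₀ he.ne, Real.rpow_one]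
        rw [h2] at h1
        rw [div_le_iff₀ hc] at h1
        linarith [h1]
    obtain ⟨τ, hτ, hkey⟩ := key
    obtain ⟨k, hk0, hkle⟩ := exists_scale (min τ (η / 4)) (by positivity)
    have h2p := two_zpow_pos k
    apply exists_CZ hn OK hx hk0
    apply hsmall (D x k) (D_subset_unit hx hk0)
    have hsub : (D x k).dilate 3 ⊆ Metric.ball x η := by
      intro z hz
      have := dilate_D_dist x k hz
      have h1 : (2:ℝ)^k ≤ η / 4 := hkle.trans (min_le_right _ _)
      exact Metric.mem_ball.mpr (lt_of_le_of_lt this (by linarith))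
    calc μ ((D x k).dilate 3) ≤ μ (Metric.ball x η) := measure_mono hsub
    _ = ENNReal.ofReal M := hball
    _ ≤ ENNReal.ofReal (c * (30 * (D x k).sidelength) ^ e) := by
        apply ENNReal.ofReal_le_ofReal
        exact hkey _ (by exact h2p) (hkle.trans (min_le_left _ _))
  -- Part 2
  have part2 : ∀ x ∈ Kp OK, ∀ η : ℝ, 0 < η → μ (Metric.ball x η) = ⊤ := by
    intro x hx η hη
    by_contra h
    exact hx.2 (keyfin x hx.1 η hη h)
  -- locally infinite implies in the small cube
  have part3' : ∀ x : Fin n → ℝ, (∀ η : ℝ, 0 < η → μ (Metric.ball x η) = ⊤) →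
      x ∈ (unitCube n).dilate (1/10) := by
    intro x hloc
    by_contra hx
    have hopen : IsOpen ((unitCube n).dilate (1/10))ᶜ := (dilate_closed _ _).isOpen_compl
    obtain ⟨η, hη, hball⟩ := Metric.isOpen_iff.mp hopen x hx
    have : μ (Metric.ball x η) ≤ μ (((unitCube n).dilate (1/10))ᶜ) := measure_mono hball
    rw [hsupp, hloc η hη] at this
    simp at this
  -- Part 1
  have part1 : IsClosed (Kp OK) := by
    apply isClosed_of_closure_subset
    intro x hx
    have hloc : ∀ η : ℝ, 0 < η → μ (Metric.ball x η) = ⊤ := by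
      intro η hη
      obtain ⟨y, hy, hd⟩ := Metric.mem_closure_iff.mp hx (η/2) (by linarith)
      have hyinf := part2 y hy (η/2) (by linarith)
      rw [eq_top_iff, ← hyinf]
      apply measure_mono
      intro z hz
      have h1 : dist z y < η/2 := Metric.mem_ball.mp hz
      have h2 := dist_triangle z y x
      have h3 : dist y x = dist x y := dist_comm y x
      exact Metric.mem_ball.mpr (by linarith)
    have hxd : x ∈ (unitCube n).dilate (1/10) := part3' x hloc
    have hxu : x ∈ (unitCube n).toSet := small_subset_unit hxd
    refine ⟨hxu, fun hxKCZ => ?_⟩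
    obtain ⟨Q, hQ⟩ := Set.mem_iUnion.mp hxKCZ
    obtain ⟨hQCZ, hxQ⟩ := Set.mem_iUnion.mp hQ
    have hk0 : Q.k ≤ 0 := k_nonpos hn hQCZ.1
    have h2p := two_zpow_pos Q.k
    obtain ⟨y, hy, hd⟩ := Metric.mem_closure_iff.mp hx (2^Q.k/2) (by positivity)
    have hyu : y ∈ (unitCube n).toSet := hy.1
    have hzz : (2:ℝ)^(Q.k - 2) = 2^Q.k / 4 := by
      rw [zpow_sub₀ (by norm_num : (2:ℝ) ≠ 0)]; norm_num
    have hsub3 : (D y (Q.k - 2)).dilate 3 ⊆ Q.dilate 3 := by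
      intro z hz i
      have h1 := hz i
      have h2 := center_dist (mem_D y (Q.k - 2)) i
      have h3 : |x i - y i| ≤ dist x y := by
        rw [← Real.dist_eq]; exact dist_le_pi_dist x y i
      have h4 := center_dist hxQ i
      have hsD : (D y (Q.k - 2)).sidelength = 2^Q.k / 4 := by
        show (2:ℝ)^(Q.k - 2) = _; exact hzz
      have hsQ : Q.sidelength = 2^Q.k := rfl
      rw [hsD] at h1 h2
      rw [hsQ] at h4 ⊢
      have h3' : |y i - x i| < 2^Q.k/2 := by
        rw [abs_sub_comm]
        exact lt_of_le_of_lt h3 hd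
      have h2' : |(D y (Q.k - 2)).center i - y i| ≤ (2^Q.k/4)/2 := by
        rw [abs_sub_comm]; exact h2
      have habs : |z i - Q.center i| ≤ |z i - (D y (Q.k - 2)).center i| +
          |(D y (Q.k - 2)).center i - y i| + |y i - x i| + |x i - Q.center i| := by
        have e1 : z i - Q.center i = (z i - (D y (Q.k - 2)).center i) +
            ((D y (Q.k - 2)).center i - y i) + (y i - x i) + (x i - Q.center i) := by ring
        rw [e1]
        exact le_trans (abs_add_le _ _) (add_le_add (le_trans (abs_add_le _ _)
          (add_le_add (abs_add_le _ _) (le_refl _))) (le_refl _))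
      linarith
    have hOKD := hmono _ Q (D_subset_unit hyu (by omega)) hQCZ.1 hQCZ.2.1 hsub3
    have := exists_CZ hn OK hyu (show Q.k - 2 ≤ 0 by omega) hOKD
    exact hy.2 this
  exact ⟨part1, part2, fun x hx => subset_closure (part3' x (part2 x hx))⟩

end
end
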